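/- arXiv:2604.11101 — 6 statements merged into one kernel-verified Lean document; each statement's English description precedes it below -/
import Mathlib

section
/- A ±1 matrix M of size n×n is a Hadamard matrix (i.e., M Mᵀ = n I) if and only if |det M| = n^(n/2). -/
open Matrix

theorem hadamard_iff_abs_det (n : ℕ) (M : Matrix (Fin n) (Fin n) ℝ)
    (hM : ∀ i j, M i j = 1 ∨ M i j = -1) :
    M * Mᵀ = (n : ℝ) • 1 ↔ |M.det| = (n : ℝ) ^ ((n : ℝ) / 2) := by
  rcases Nat.eq_zero_or_pos n with hn | hn
  · subst hn
    constructor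
    · intro _
      simp [Matrix.det_isEmpty]
    · intro _
      ext i j
      exact i.elim0
  have hn' : (0:ℝ) < (n:ℝ) := by exact_mod_cast hn
  constructor
  · intro h
    have hdet : M.det * M.det = (n:ℝ) ^ n := by
      have := congrArg Matrix.det h
      rwa [Matrix.det_mul, Matrix.det_transpose, Matrix.det_smul, Matrix.det_one,
        mul_one, Fintype.card_fin] at this
    have : |M.det| = Real.sqrt ((n:ℝ) ^ n) := by
      rw [← Real.sqrt_mul_self_eq_abs, hdet]
    rw [this, Real.sqrt_eq_rpow, ← Real.rpow_natCast (n:ℝ) n,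
      ← Real.rpow_mul hn'.le]
    ring_nf
  · intro h
    -- determinant squared
    have hdetG : (M * Mᵀ).det = (n:ℝ) ^ n := by
      rw [Matrix.det_mul, Matrix.det_transpose, ← sq, ← sq_abs, h,
        ← Real.rpow_natCast ((n:ℝ) ^ ((n:ℝ)/2)) 2, ← Real.rpow_mul hn'.le,
        ← Real.rpow_natCast (n:ℝ) n]
      norm_num
    have hGH : (M * Mᵀ).IsHermitian := by
      have := Matrix.isHermitian_mul_conjTranspose_self M
      have hct : Mᴴ = Mᵀ := by ext i j; simp [Matrix.conjTranspose_apply]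
      rwa [hct] at this
    have hPSD : (M * Mᵀ).PosSemidef := by
      have := Matrix.posSemidef_self_mul_conjTranspose M
      have hct : Mᴴ = Mᵀ := by ext i j; simp [Matrix.conjTranspose_apply]
      rwa [hct] at this
    set μ : Fin n → ℝ := hGH.eigenvalues with hμdef
    have hμnonneg : ∀ i, 0 ≤ μ i := fun i => hPSD.eigenvalues_nonneg i
    have hprod : ∏ i, μ i = (n:ℝ) ^ n := by
      have := hGH.det_eq_prod_eigenvalues
      rw [hdetG] at this
      simpa using this.symm
    -- diagonal entries are n
    have hGdiag : ∀ i, (M * Mᵀ) i i = (n:ℝ) := by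
      intro i
      rw [Matrix.mul_apply]
      have h1 : ∀ j, M i j * Mᵀ j i = 1 := by
        intro j
        rw [Matrix.transpose_apply]
        rcases hM i j with h1 | h1 <;> rw [h1] <;> norm_num
      simp only [Matrix.transpose_apply] at h1 ⊢
      simp [h1]
    -- trace = sum of eigenvalues
    have hsum : ∑ i, μ i = (n:ℝ) * n := by
      have htr2 : (M * Mᵀ).trace = (n:ℝ) * n := by
        rw [Matrix.trace]
        simp only [Matrix.diag_apply, hGdiag]
        simp [Finset.sum_const, mul_comm]
      have htr : (M * Mᵀ).trace = ∑ i, μ i := by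
        conv_lhs => rw [hGH.spectral_theorem]
        rw [Unitary.conjStarAlgAut_apply, Matrix.trace_mul_cycle, Matrix.mem_unitaryGroup_iff'.mp
          (hGH.eigenvectorUnitary).2, one_mul, Matrix.trace_diagonal]
        simp [RCLike.ofReal_real_eq_id, hμdef]
      rw [← htr, htr2]
    -- eigenvalues are positive
    have hμpos : ∀ i, 0 < μ i := by
      intro i
      rcases lt_or_eq_of_le (hμnonneg i) with h' | h'
      · exact h'
      · exfalso
        have : ∏ j, μ j = 0 := Finset.prod_eq_zero (Finset.mem_univ i) h'.symm
        rw [hprod] at this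
        exact absurd this (by positivity)
    -- all eigenvalues equal n via AM-GM equality
    have hμeq : ∀ i, μ i = (n:ℝ) := by
      by_contra hcon
      push_neg at hcon
      obtain ⟨j, hj⟩ := hcon
      set x : Fin n → ℝ := fun i => μ i / n with hxdef
      have hxpos : ∀ i, 0 < x i := fun i => div_pos (hμpos i) hn'
      have hxprod : ∏ i, x i = 1 := by
        rw [hxdef, Finset.prod_div_distrib, hprod, Finset.prod_const, Finset.card_univ,
          Fintype.card_fin, div_self (pow_ne_zero _ hn'.ne')]
      have hxsum : ∑ i, x i = (n:ℝ) := by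
        rw [hxdef, ← Finset.sum_div, hsum, mul_div_assoc, div_self hn'.ne', mul_one]
      have hxj : x j ≠ 1 := fun hh => hj ((div_eq_one_iff_eq hn'.ne').mp hh)
      have hlt : ∏ i, x i < ∏ i, Real.exp (x i - 1) := by
        apply Finset.prod_lt_prod (fun i _ => hxpos i)
        · intro i _
          have := Real.add_one_le_exp (x i - 1)
          linarith
        · refine ⟨j, Finset.mem_univ j, ?_⟩
          have := Real.add_one_lt_exp (x := x j - 1) (sub_ne_zero.mpr hxj)
          linarith
      rw [hxprod, ← Real.exp_sum] at hlt
      have : ∑ i, (x i - 1) = 0 := by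
        rw [Finset.sum_sub_distrib, hxsum]
        simp
      rw [this, Real.exp_zero] at hlt
      exact lt_irrefl 1 hlt
    -- conclude via spectral theorem
    have hdiag : Matrix.diagonal (RCLike.ofReal ∘ μ) = (n:ℝ) • (1 : Matrix (Fin n) (Fin n) ℝ) := by
      rw [Matrix.smul_one_eq_diagonal]
      ext i k
      simp [Matrix.diagonal, hμeq, RCLike.ofReal_real_eq_id]
    calc M * Mᵀ = (hGH.eigenvectorUnitary : Matrix (Fin n) (Fin n) ℝ) *
          Matrix.diagonal (RCLike.ofReal ∘ μ) *
          (star (hGH.eigenvectorUnitary : Matrix (Fin n) (Fin n) ℝ)) := hGH.spectral_theorem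
      _ = (n:ℝ) • ((hGH.eigenvectorUnitary : Matrix (Fin n) (Fin n) ℝ) *
          (star (hGH.eigenvectorUnitary : Matrix (Fin n) (Fin n) ℝ))) := by
          rw [hdiag]
          rw [Matrix.mul_smul, Matrix.smul_mul, mul_one]
      _ = (n:ℝ) • 1 := by
          rw [Matrix.mem_unitaryGroup_iff.mp (hGH.eigenvectorUnitary).2]
end

section
/- If M is an n×n real matrix with all entries of absolute value at most 1, then |det M| ≤ n^(n/2). -/
open Matrix Finset

lemma trace_eq_sum_eig {n : ℕ} {A : Matrix (Fin n) (Fin n) ℝ} (hA : A.IsHermitian) :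
    A.trace = ∑ i, hA.eigenvalues i := by
  conv_lhs => rw [hA.spectral_theorem, Unitary.conjStarAlgAut_apply]
  rw [Matrix.trace_mul_cycle]
  have h1 : (star (hA.eigenvectorUnitary : Matrix (Fin n) (Fin n) ℝ)) *
      (hA.eigenvectorUnitary : Matrix (Fin n) (Fin n) ℝ) = 1 :=
    (Matrix.mem_unitaryGroup_iff').mp hA.eigenvectorUnitary.2
  rw [h1, one_mul, Matrix.trace_diagonal]
  simp

theorem hadamard_det_bound (n : ℕ) (M : Matrix (Fin n) (Fin n) ℝ)
    (hM : ∀ i j, |M i j| ≤ 1) :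
    |M.det| ≤ (n : ℝ) ^ ((n : ℝ) / 2) := by
  rcases Nat.eq_zero_or_pos n with hn | hn
  · subst hn
    simp [Matrix.det_fin_zero]
  have hnR : (0 : ℝ) < n := by exact_mod_cast hn
  set A := Mᵀ * M with hA
  have hH : A.IsHermitian := by
    simpa using Matrix.isHermitian_conjTranspose_mul_self M
  have hPSD : A.PosSemidef := by
    simpa using Matrix.posSemidef_conjTranspose_mul_self M
  have hEig : ∀ i, 0 ≤ hH.eigenvalues i := hPSD.eigenvalues_nonneg
  -- trace bound
  have htrace : A.trace ≤ (n : ℝ) ^ 2 := by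
    rw [Matrix.trace]
    calc ∑ i, A.diag i ≤ ∑ _i : Fin n, (n : ℝ) := by
          apply Finset.sum_le_sum
          intro i _
          simp only [hA, Matrix.diag_apply, Matrix.mul_apply, Matrix.transpose_apply]
          calc ∑ j, M j i * M j i ≤ ∑ _j : Fin n, (1 : ℝ) := by
                apply Finset.sum_le_sum
                intro j _
                have := hM j i
                nlinarith [abs_nonneg (M j i), sq_abs (M j i)]
            _ = n := by simp
      _ = (n : ℝ) ^ 2 := by rw [Finset.sum_const]; simp; ring
  -- AM-GM
  have hsum : ∑ i, hH.eigenvalues i ≤ (n : ℝ) ^ 2 := by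
    rw [← trace_eq_sum_eig hH]; exact htrace
  have hAMGM : ∏ i, hH.eigenvalues i ^ ((1 : ℝ) / n) ≤ (1 / n) * ∑ i, hH.eigenvalues i := by
    have h := Real.geom_mean_le_arith_mean_weighted Finset.univ
      (fun _ => (1 : ℝ) / n) hH.eigenvalues (fun _ _ => by positivity)
      (by simp [Finset.sum_const]; field_simp) (fun i _ => hEig i)
    simpa [Finset.mul_sum] using h
  have hGM : ∏ i, hH.eigenvalues i ^ ((1 : ℝ) / n) ≤ (n : ℝ) := by
    calc ∏ i, hH.eigenvalues i ^ ((1 : ℝ) / n)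
        ≤ (1 / n) * ∑ i, hH.eigenvalues i := hAMGM
      _ ≤ (1 / n) * (n : ℝ) ^ 2 := by
          apply mul_le_mul_of_nonneg_left hsum
          positivity
      _ = (n : ℝ) := by field_simp
  have hkey : ∀ i : Fin n, (hH.eigenvalues i ^ ((1 : ℝ) / n)) ^ (n : ℕ) = hH.eigenvalues i := by
    intro i
    rw [← Real.rpow_natCast (hH.eigenvalues i ^ ((1 : ℝ) / n)) n,
      ← Real.rpow_mul (hEig i), one_div_mul_cancel hnR.ne', Real.rpow_one]
  have hprod : ∏ i, hH.eigenvalues i ≤ (n : ℝ) ^ (n : ℕ) := by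
    calc ∏ i, hH.eigenvalues i = ∏ i, (hH.eigenvalues i ^ ((1 : ℝ) / n)) ^ (n : ℕ) := by
          simp_rw [hkey]
      _ = (∏ i, hH.eigenvalues i ^ ((1 : ℝ) / n)) ^ (n : ℕ) := by
          rw [Finset.prod_pow]
      _ ≤ (n : ℝ) ^ (n : ℕ) := by
          apply pow_le_pow_left₀ _ hGM
          exact Finset.prod_nonneg fun i _ => Real.rpow_nonneg (hEig i) _
  have hdet : |M.det| ^ 2 ≤ (n : ℝ) ^ (n : ℕ) := by
    have h1 : A.det = ∏ i, hH.eigenvalues i := by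
      simpa using hH.det_eq_prod_eigenvalues
    have h2 : A.det = M.det ^ 2 := by
      rw [hA, Matrix.det_mul, Matrix.det_transpose]; ring
    rw [sq_abs, ← h2, h1]
    exact hprod
  have hR : ((n : ℝ) ^ ((n : ℝ) / 2)) ^ 2 = (n : ℝ) ^ (n : ℕ) := by
    rw [← Real.rpow_natCast ((n : ℝ) ^ ((n : ℝ) / 2)) 2, ← Real.rpow_mul hnR.le]
    rw [show (n : ℝ) / 2 * (2 : ℕ) = (n : ℝ) by push_cast; ring]
    exact Real.rpow_natCast _ n
  have hRnn : (0 : ℝ) ≤ (n : ℝ) ^ ((n : ℝ) / 2) := Real.rpow_nonneg hnR.le _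
  nlinarith [abs_nonneg M.det, hdet, hR]
end

section
/- Let A, B, C, D be n'×n' circulant matrices with entries in {−1,1} satisfying A Aᵀ + B Bᵀ + C Cᵀ + D Dᵀ = 4n' I. Then the 4n'×4n' Williamson array M = [[A, B, C, D], [−B, A, −D, C], [−C, D, A, −B], [−D, −C, B, A]], where additionally A, B, C, D are symmetric, is a Hadamard matrix of order 4n'. -/
open Matrix

lemma circ_comm {n : ℕ} [NeZero n] (f g : Fin n → ℝ) :
    (Matrix.of fun i j => f (j - i)) * (Matrix.of fun i j => g (j - i)) =
    (Matrix.of fun i j => g (j - i)) * (Matrix.of fun i j => f (j - i)) := by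
  ext i j
  simp only [Matrix.mul_apply, Matrix.of_apply]
  rw [← Equiv.sum_comp (Equiv.subLeft (i + j)) (fun k => g (k - i) * f (j - k))]
  apply Finset.sum_congr rfl
  intro k _
  simp only [Equiv.subLeft_apply]
  have h1 : i + j - k - i = j - k := by abel
  have h2 : j - (i + j - k) = k - i := by abel
  rw [h1, h2, mul_comm]

theorem williamson_hadamard (n' : ℕ) (a : Fin 4 → Fin n' → ℝ)
    (ha : ∀ i k, a i k = 1 ∨ a i k = -1)
    (A B C D : Matrix (Fin n') (Fin n') ℝ)
    (hA : A = Matrix.of fun i j => a 0 (j - i))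
    (hB : B = Matrix.of fun i j => a 1 (j - i))
    (hC : C = Matrix.of fun i j => a 2 (j - i))
    (hD : D = Matrix.of fun i j => a 3 (j - i))
    (hAs : Aᵀ = A) (hBs : Bᵀ = B) (hCs : Cᵀ = C) (hDs : Dᵀ = D)
    (hsum : A * Aᵀ + B * Bᵀ + C * Cᵀ + D * Dᵀ = ((4 * n' : ℕ) : ℝ) • 1)
    (M : Matrix (Fin 4 × Fin n') (Fin 4 × Fin n') ℝ)
    (hM : M = Matrix.of fun p q =>
      (![![A, B, C, D], ![-B, A, -D, C], ![-C, D, A, -B], ![-D, -C, B, A]]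
        p.1 q.1) p.2 q.2) :
    (∀ p q, M p q = 1 ∨ M p q = -1) ∧ M * Mᵀ = ((4 * n' : ℕ) : ℝ) • 1 := by
  rcases Nat.eq_zero_or_pos n' with hn | hn
  · subst hn
    constructor
    · intro p q; exact p.2.elim0
    · ext p q; exact p.2.elim0
  haveI : NeZero n' := ⟨hn.ne'⟩
  constructor
  · rintro ⟨p1, p2⟩ ⟨q1, q2⟩
    rw [hM]
    have ha' : ∀ i k, -a i k = 1 ∨ a i k = 1 := by
      intro i k; rcases ha i k with h | h <;> simp [h]
    fin_cases p1 <;> fin_cases q1 <;>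
      simp [hA, hB, hC, hD] <;>
      first
        | exact ha _ _
        | exact ha' _ _
  · -- commutation lemmas
    have hAB : A * B = B * A := by rw [hA, hB]; exact circ_comm _ _
    have hAC : A * C = C * A := by rw [hA, hC]; exact circ_comm _ _
    have hAD : A * D = D * A := by rw [hA, hD]; exact circ_comm _ _
    have hBC : B * C = C * B := by rw [hB, hC]; exact circ_comm _ _
    have hBD : B * D = D * B := by rw [hB, hD]; exact circ_comm _ _
    have hCD : C * D = D * C := by rw [hC, hD]; exact circ_comm _ _
    rw [hAs, hBs, hCs, hDs] at hsum
    push_cast at hsum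
    set W : Fin 4 → Fin 4 → Matrix (Fin n') (Fin n') ℝ :=
      ![![A, B, C, D], ![-B, A, -D, C], ![-C, D, A, -B], ![-D, -C, B, A]] with hW
    have key : ∀ p1 q1 : Fin 4, ∑ r1, W p1 r1 * (W q1 r1)ᵀ =
        if p1 = q1 then ((4 * n' : ℕ) : ℝ) • (1 : Matrix (Fin n') (Fin n') ℝ) else 0 := by
      intro p1 q1
      fin_cases p1 <;> fin_cases q1 <;>
        simp [hW, Fin.sum_univ_four, Matrix.transpose_neg, hAs, hBs, hCs, hDs,
          Matrix.neg_mul, Matrix.mul_neg, -Matrix.smul_apply, -Matrix.add_apply] <;>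
        (try rw [hAB]) <;> (try rw [hAC]) <;> (try rw [hAD]) <;>
        (try rw [hBC]) <;> (try rw [hBD]) <;> (try rw [hCD]) <;>
        first
          | (push_cast; rw [← hsum]; try abel1)
          | abel1
    ext ⟨p1, p2⟩ ⟨q1, q2⟩
    rw [hM]
    simp only [Matrix.mul_apply, Matrix.transpose_apply, Matrix.of_apply,
      Fintype.sum_prod_type]
    have := congrFun (congrFun (key p1 q1) p2) q2
    simp only [Matrix.sum_apply, Matrix.mul_apply, Matrix.transpose_apply] at this
    rw [this]
    by_cases h : p1 = q1 <;>
      simp [h, Matrix.smul_apply, Matrix.one_apply, Prod.ext_iff]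
end

section
/- Let A, B, C, D be n'×n' circulant ±1 matrices with A Aᵀ + B Bᵀ + C Cᵀ + D Dᵀ = 4n' I, and let F be the n'×n' matrix with 1s on the antidiagonal and 0s elsewhere. Then the Goethals–Seidel array M = [[A, BF, CF, DF], [−BF, A, −FD, FC], [−CF, FD, A, −FB], [−DF, −FC, FB, A]] is a Hadamard matrix of order 4n'. -/
open Matrix

namespace GS

variable {n : ℕ}

/-- The antidiagonal (exchange) matrix. -/
def Fr (n : ℕ) : Matrix (Fin n) (Fin n) ℝ :=
  Matrix.of fun i j : Fin n => if (i : ℕ) + (j : ℕ) = n - 1 then (1 : ℝ) else 0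

lemma Fr_apply (i j : Fin n) : Fr n i j = if j = Fin.rev i then 1 else 0 := by
  have hi := i.isLt; have hj := j.isLt
  have h : ((i : ℕ) + (j : ℕ) = n - 1) ↔ (j = Fin.rev i) := by
    rw [Fin.ext_iff, Fin.val_rev]; omega
  simp [Fr, h]

lemma Fr_apply' (i j : Fin n) : Fr n i j = if i = Fin.rev j then 1 else 0 := by
  rw [Fr_apply]
  congr 1
  rw [eq_iff_iff]
  constructor
  · rintro rfl; rw [Fin.rev_rev]
  · rintro rfl; rw [Fin.rev_rev]

lemma mul_Fr_apply (X : Matrix (Fin n) (Fin n) ℝ) (i j : Fin n) :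
    (X * Fr n) i j = X i (Fin.rev j) := by
  rw [Matrix.mul_apply]
  have : ∀ k : Fin n, Fr n k j = if k = Fin.rev j then 1 else 0 := fun k => Fr_apply' k j
  simp only [this, mul_ite, mul_one, mul_zero]
  rw [Finset.sum_ite_eq' Finset.univ (Fin.rev j) (fun k => X i k)]
  simp

lemma Fr_mul_apply (X : Matrix (Fin n) (Fin n) ℝ) (i j : Fin n) :
    (Fr n * X) i j = X (Fin.rev i) j := by
  rw [Matrix.mul_apply]
  simp only [Fr_apply, ite_mul, one_mul, zero_mul]
  rw [Finset.sum_ite_eq' Finset.univ (Fin.rev i) (fun k => X k j)]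
  simp

lemma Fr_transpose : (Fr n)ᵀ = Fr n := by
  ext i j
  rw [Matrix.transpose_apply, Fr_apply, Fr_apply']

lemma Fr_mul_Fr : Fr n * Fr n = 1 := by
  ext i j
  rw [mul_Fr_apply, Fr_apply', Fin.rev_rev]
  simp [Matrix.one_apply]

lemma sub_rev (i j : Fin (n + 1)) : i - Fin.rev j = j - Fin.rev i := by
  have hi := i.isLt; have hj := j.isLt
  apply Fin.ext
  simp only [Fin.sub_def, Fin.val_rev]
  congr 1
  omega

/-- A matrix is circulant. -/
def IsC (X : Matrix (Fin (n + 1)) (Fin (n + 1)) ℝ) : Prop :=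
  ∃ v, X = Matrix.circulant v

lemma isC_tr {X : Matrix (Fin (n + 1)) (Fin (n + 1)) ℝ} (hX : IsC X) : IsC Xᵀ := by
  obtain ⟨v, rfl⟩ := hX
  exact ⟨_, Matrix.transpose_circulant v⟩

lemma isC_mul {X Y : Matrix (Fin (n + 1)) (Fin (n + 1)) ℝ} (hX : IsC X) (hY : IsC Y) :
    IsC (X * Y) := by
  obtain ⟨v, rfl⟩ := hX; obtain ⟨w, rfl⟩ := hY
  exact ⟨_, Matrix.circulant_mul v w⟩

lemma isC_comm {X Y : Matrix (Fin (n + 1)) (Fin (n + 1)) ℝ} (hX : IsC X) (hY : IsC Y) :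
    X * Y = Y * X := by
  obtain ⟨v, rfl⟩ := hX; obtain ⟨w, rfl⟩ := hY
  exact Matrix.circulant_mul_comm v w

lemma swapF {X : Matrix (Fin (n + 1)) (Fin (n + 1)) ℝ} (hX : IsC X) :
    X * Fr (n + 1) = Fr (n + 1) * Xᵀ := by
  obtain ⟨v, rfl⟩ := hX
  ext i j
  rw [mul_Fr_apply, Fr_mul_apply, Matrix.transpose_apply, Matrix.circulant_apply,
    Matrix.circulant_apply, sub_rev]

lemma Fswap {X : Matrix (Fin (n + 1)) (Fin (n + 1)) ℝ} (hX : IsC X) :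
    Fr (n + 1) * X = Xᵀ * Fr (n + 1) := by
  have := swapF (isC_tr hX)
  rw [Matrix.transpose_transpose] at this
  exact this.symm

section prods
variable {X Y : Matrix (Fin (n + 1)) (Fin (n + 1)) ℝ}

lemma XF_tr (hX : IsC X) : (X * Fr (n + 1))ᵀ = X * Fr (n + 1) := by
  rw [Matrix.transpose_mul, Fr_transpose, ← swapF hX]

lemma FX_tr (hX : IsC X) : (Fr (n + 1) * X)ᵀ = Fr (n + 1) * X := by
  rw [Matrix.transpose_mul, Fr_transpose, ← Fswap hX]

lemma L1 : (X * Fr (n + 1)) * (Y * Fr (n + 1))ᵀ = X * Yᵀ := by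
  rw [Matrix.transpose_mul, Fr_transpose, Matrix.mul_assoc, ← Matrix.mul_assoc (Fr (n + 1)),
    Fr_mul_Fr, Matrix.one_mul]

lemma L2 (hY : IsC Y) : (X * Fr (n + 1)) * (Fr (n + 1) * Y)ᵀ = X * Y := by
  rw [FX_tr hY, Matrix.mul_assoc, ← Matrix.mul_assoc (Fr (n + 1)), Fr_mul_Fr, Matrix.one_mul]

lemma L3 (hX : IsC X) (hY : IsC Y) :
    (Fr (n + 1) * X) * (Y * Fr (n + 1))ᵀ = Yᵀ * Xᵀ := by
  rw [XF_tr hY, Matrix.mul_assoc, ← Matrix.mul_assoc X, swapF (isC_mul hX hY),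
    ← Matrix.mul_assoc, Fr_mul_Fr, Matrix.one_mul, Matrix.transpose_mul]

lemma L4 (hX : IsC X) (hY : IsC Y) :
    (Fr (n + 1) * X) * (Fr (n + 1) * Y)ᵀ = Xᵀ * Y := by
  rw [FX_tr hY, Matrix.mul_assoc, ← Matrix.mul_assoc X, swapF hX, ← Matrix.mul_assoc,
    ← Matrix.mul_assoc, Fr_mul_Fr, Matrix.one_mul]

lemma L5 (hY : IsC Y) : X * (Y * Fr (n + 1))ᵀ = (X * Y) * Fr (n + 1) := by
  rw [XF_tr hY, ← Matrix.mul_assoc]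

lemma L6 : X * (Fr (n + 1) * Y)ᵀ = (X * Yᵀ) * Fr (n + 1) := by
  rw [Matrix.transpose_mul, Fr_transpose, ← Matrix.mul_assoc]

lemma L7 (hY : IsC Y) : (X * Fr (n + 1)) * Yᵀ = (X * Y) * Fr (n + 1) := by
  rw [Matrix.mul_assoc, Fswap (isC_tr hY), Matrix.transpose_transpose, ← Matrix.mul_assoc]

lemma L8 (hX : IsC X) (hY : IsC Y) : (Fr (n + 1) * X) * Yᵀ = (Y * Xᵀ) * Fr (n + 1) := by
  rw [Matrix.mul_assoc, Fswap (isC_mul hX (isC_tr hY)), Matrix.transpose_mul,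
    Matrix.transpose_transpose]

end prods

end GS

lemma pm1_neg {r : ℝ} (h : r = 1 ∨ r = -1) : -r = 1 ∨ -r = -1 := by
  rcases h with h | h <;> rw [h] <;> norm_num

open GS

theorem goethals_seidel_hadamard (n' : ℕ) (a : Fin 4 → Fin n' → ℝ)
    (ha : ∀ i k, a i k = 1 ∨ a i k = -1)
    (A B C D F : Matrix (Fin n') (Fin n') ℝ)
    (hA : A = Matrix.of fun i j => a 0 (j - i))
    (hB : B = Matrix.of fun i j => a 1 (j - i))
    (hC : C = Matrix.of fun i j => a 2 (j - i))
    (hD : D = Matrix.of fun i j => a 3 (j - i))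
    (hF : F = Matrix.of fun i j : Fin n' => if (i : ℕ) + (j : ℕ) = n' - 1 then (1 : ℝ) else 0)
    (hsum : A * Aᵀ + B * Bᵀ + C * Cᵀ + D * Dᵀ = ((4 * n' : ℕ) : ℝ) • 1)
    (M : Matrix (Fin 4 × Fin n') (Fin 4 × Fin n') ℝ)
    (hM : M = Matrix.of fun p q =>
      (![![A, B * F, C * F, D * F],
         ![-(B * F), A, -(F * D), F * C],
         ![-(C * F), F * D, A, -(F * B)],
         ![-(D * F), -(F * C), F * B, A]] p.1 q.1) p.2 q.2) :
    (∀ p q, M p q = 1 ∨ M p q = -1) ∧ M * Mᵀ = ((4 * n' : ℕ) : ℝ) • 1 := by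
  obtain _ | m := n'
  · refine ⟨fun p q => q.2.elim0, ?_⟩
    ext ⟨i, x⟩ q
    exact x.elim0
  · have hF' : F = Fr (m + 1) := hF
    subst hF'
    subst hM
    have hsum' : A * Aᵀ + B * Bᵀ + C * Cᵀ + D * Dᵀ
        = ((4 * (m + 1) : ℕ) : ℝ) • (1 : Matrix (Fin (m+1)) (Fin (m+1)) ℝ) := hsum
    have cA : IsC A := ⟨fun k => a 0 (-k), by rw [hA]; ext i j; simp [Matrix.circulant_apply, neg_sub]⟩
    have cB : IsC B := ⟨fun k => a 1 (-k), by rw [hB]; ext i j; simp [Matrix.circulant_apply, neg_sub]⟩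
    have cC : IsC C := ⟨fun k => a 2 (-k), by rw [hC]; ext i j; simp [Matrix.circulant_apply, neg_sub]⟩
    have cD : IsC D := ⟨fun k => a 3 (-k), by rw [hD]; ext i j; simp [Matrix.circulant_apply, neg_sub]⟩
    constructor
    · rintro ⟨i, x⟩ ⟨j, y⟩
      fin_cases i <;> fin_cases j <;>
        simp only [Matrix.of_apply, Fin.zero_eta, Fin.mk_one, Fin.reduceFinMk,
          Matrix.cons_val', Matrix.cons_val_zero, Matrix.cons_val_one,
          Matrix.head_cons, Matrix.cons_val_fin_one, Matrix.empty_val',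
          Matrix.cons_val_two, Matrix.cons_val_three, Matrix.tail_cons, Matrix.head_fin_const,
          Matrix.neg_apply, mul_Fr_apply, Fr_mul_apply, hA, hB, hC, hD] <;>
        first
          | exact ha _ _
          | exact pm1_neg (ha _ _)
    · have key : ∀ i j : Fin 4,
          (∑ k : Fin 4,
            (![![A, B * Fr (m+1), C * Fr (m+1), D * Fr (m+1)],
               ![-(B * Fr (m+1)), A, -(Fr (m+1) * D), Fr (m+1) * C],
               ![-(C * Fr (m+1)), Fr (m+1) * D, A, -(Fr (m+1) * B)],
               ![-(D * Fr (m+1)), -(Fr (m+1) * C), Fr (m+1) * B, A]] i k) *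
            (![![A, B * Fr (m+1), C * Fr (m+1), D * Fr (m+1)],
               ![-(B * Fr (m+1)), A, -(Fr (m+1) * D), Fr (m+1) * C],
               ![-(C * Fr (m+1)), Fr (m+1) * D, A, -(Fr (m+1) * B)],
               ![-(D * Fr (m+1)), -(Fr (m+1) * C), Fr (m+1) * B, A]] j k)ᵀ)
          = if i = j then ((4 * (m + 1) : ℕ) : ℝ) • (1 : Matrix (Fin (m+1)) (Fin (m+1)) ℝ)
            else 0 := by
        intro i j
        fin_cases i <;> fin_cases j <;>
          simp only [Fin.sum_univ_four, Fin.isValue, Fin.zero_eta, Fin.mk_one, Fin.reduceFinMk,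
            Matrix.cons_val', Matrix.cons_val_zero,
            Matrix.cons_val_one, Matrix.head_cons, Matrix.cons_val_two, Matrix.cons_val_three,
            Matrix.tail_cons, Matrix.head_fin_const, Matrix.empty_val',
            Matrix.transpose_neg, Matrix.mul_neg, Matrix.neg_mul, neg_neg,
            Fin.reduceEq, reduceIte] <;>
          (try simp only [L1, L2 cA, L2 cB, L2 cC, L2 cD,
            L3 cB cC, L3 cC cB, L3 cB cD, L3 cD cB, L3 cC cD, L3 cD cC,
            L4 cB cB, L4 cC cC, L4 cD cD, L4 cB cC, L4 cC cB, L4 cB cD, L4 cD cB,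
            L4 cC cD, L4 cD cC]) <;>
          (try simp only [L5 cA, L5 cB, L5 cC, L5 cD, L6, L7 cA, L7 cB, L7 cC, L7 cD,
            L8 cB cA, L8 cC cA, L8 cD cA]) <;>
          (try simp only [isC_comm cB cA, isC_comm cC cA, isC_comm cD cA,
            isC_comm cC cB, isC_comm cD cB, isC_comm cD cC,
            isC_comm (isC_tr cB) cB, isC_comm (isC_tr cC) cC, isC_comm (isC_tr cD) cD,
            isC_comm (isC_tr cB) cC, isC_comm (isC_tr cC) cB,
            isC_comm (isC_tr cB) cD, isC_comm (isC_tr cD) cB,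
            isC_comm (isC_tr cC) cD, isC_comm (isC_tr cD) cC,
            isC_comm (isC_tr cC) (isC_tr cB), isC_comm (isC_tr cD) (isC_tr cB),
            isC_comm (isC_tr cD) (isC_tr cC)]) <;>
          first
            | (rw [← hsum']; try abel1)
            | abel1
      ext ⟨i, x⟩ ⟨j, y⟩
      rw [Matrix.mul_apply, Fintype.sum_prod_type]
      simp only [Matrix.of_apply, Matrix.transpose_apply]
      have inner : ∀ (X Y : Matrix (Fin (m+1)) (Fin (m+1)) ℝ) (x y : Fin (m+1)),
          (∑ z, X x z * Y y z) = (X * Yᵀ) x y := by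
        intro X Y x y
        rw [Matrix.mul_apply]
        simp [Matrix.transpose_apply]
      simp only [inner]
      rw [← Matrix.sum_apply x y Finset.univ, key i j]
      by_cases hij : i = j
      · subst hij
        simp [Matrix.smul_apply, Matrix.one_apply, Prod.ext_iff]
      · simp [Matrix.smul_apply, Matrix.one_apply, Prod.ext_iff, hij]
end

section
/- If M of order n = 4n' is the Goethals–Seidel array built from circulant ±1 matrices A, B, C, D (with antidiagonal matrix F), then M is Hadamard if and only if for every j ∈ {0,…,n'−1}, |â_j|² + |b̂_j|² + |ĉ_j|² + |d̂_j|² = n, where â_j = Σ_k a_k ω^{jk} (and similarly for b, c, d) with ω = exp(2πi/n') and (a_k), (b_k), (c_k), (d_k) the first rows of A, B, C, D. -/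
open Matrix Complex

theorem goethals_seidel_hadamard_iff_fourier (n' : ℕ) (hn : 0 < n')
    (a : Fin 4 → Fin n' → ℝ)
    (ha : ∀ i k, a i k = 1 ∨ a i k = -1)
    (A B C D F : Matrix (Fin n') (Fin n') ℝ)
    (hA : A = Matrix.of fun i j => a 0 (j - i))
    (hB : B = Matrix.of fun i j => a 1 (j - i))
    (hC : C = Matrix.of fun i j => a 2 (j - i))
    (hD : D = Matrix.of fun i j => a 3 (j - i))
    (hF : F = Matrix.of fun i j : Fin n' => if (i : ℕ) + (j : ℕ) = n' - 1 then (1 : ℝ) else 0)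
    (M : Matrix (Fin 4 × Fin n') (Fin 4 × Fin n') ℝ)
    (hM : M = Matrix.of fun p q =>
      (![![A, B * F, C * F, D * F],
         ![-(B * F), A, -(F * D), F * C],
         ![-(C * F), F * D, A, -(F * B)],
         ![-(D * F), -(F * C), F * B, A]] p.1 q.1) p.2 q.2) :
    M * Mᵀ = ((4 * n' : ℕ) : ℝ) • 1 ↔
      ∀ j : Fin n',
        ∑ i : Fin 4,
          ‖∑ k : Fin n',
            (a i k : ℂ) * Complex.exp (2 * Real.pi * I / n') ^ ((j : ℕ) * (k : ℕ))‖ ^ 2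
          = (4 * n' : ℕ) := by
  haveI : NeZero n' := ⟨hn.ne'⟩
  obtain ⟨v, hv⟩ : ∃ v : Fin 4 → Fin n' → ℝ, v = fun i k => a i (-k) := ⟨_, rfl⟩
  have hcircof : ∀ i : Fin 4, (Matrix.of fun x y : Fin n' => a i (y - x)) = circulant (v i) := by
    intro i; ext x y
    simp [Matrix.circulant_apply, hv, neg_sub]
  rw [hcircof 0] at hA; rw [hcircof 1] at hB; rw [hcircof 2] at hC; rw [hcircof 3] at hD
  rw [hA, hB, hC, hD] at hM
  clear hA hB hC hD
  -- F facts
  have hcond : ∀ i j : Fin n', ((i:ℕ) + (j:ℕ) = n' - 1) ↔ j = Fin.rev i := by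
    intro i j
    have hi := i.is_lt; have hj := j.is_lt
    rw [Fin.ext_iff, Fin.val_rev]; omega
  have hF' : F = Matrix.of fun i j : Fin n' => if j = Fin.rev i then (1:ℝ) else 0 := by
    rw [hF]; ext i j
    simp [hcond i j]
  have hFmul : ∀ X : Matrix (Fin n') (Fin n') ℝ, F * X = X.submatrix Fin.rev id := by
    intro X; ext i j
    rw [Matrix.mul_apply]
    simp [hF', Matrix.submatrix_apply]
  have hmulF : ∀ X : Matrix (Fin n') (Fin n') ℝ, X * F = X.submatrix id Fin.rev := by
    intro X; ext i j
    rw [Matrix.mul_apply]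
    have hFkj : ∀ k : Fin n', F k j = if k = Fin.rev j then (1:ℝ) else 0 := by
      intro k
      rw [hF]
      simp only [Matrix.of_apply, Nat.add_comm (k:ℕ) (j:ℕ), hcond j k]
    simp [hFkj, Matrix.submatrix_apply]
  have hFt : Fᵀ = F := by
    rw [hF]; ext i j; simp [Matrix.transpose_apply, add_comm]
  have hFF : F * F = 1 := by
    rw [hFmul, hF']; ext i j
    simp [Matrix.submatrix_apply, Matrix.one_apply, Fin.rev_rev, eq_comm]
  have hrevadd : ∀ i j : Fin n', Fin.rev i - j = Fin.rev j - i := by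
    intro i j
    rw [sub_eq_sub_iff_add_eq_add]
    have hrr : ∀ x : Fin n', ((Fin.rev x + x : Fin n') : ℕ) = n' - 1 := by
      intro x
      rw [Fin.add_def]
      simp only [Fin.val_rev]
      have := x.is_lt
      rw [Nat.mod_eq_of_lt (by omega)]
      omega
    rw [Fin.ext_iff, hrr, hrr]
  have hFc : ∀ w : Fin n' → ℝ, F * circulant w = (circulant w)ᵀ * F := by
    intro w
    rw [hFmul, hmulF]; ext i j
    simp [Matrix.submatrix_apply, Matrix.circulant_apply, Matrix.transpose_apply, hrevadd i j]
  have hFcT : ∀ w : Fin n' → ℝ, F * (circulant w)ᵀ = circulant w * F := by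
    intro w
    rw [Matrix.transpose_circulant]
    rw [hFc]
    rw [Matrix.transpose_circulant]
    congr 1
    ext i j
    simp [Matrix.circulant_apply]
  have hFc' : ∀ (w : Fin n' → ℝ) (X : Matrix (Fin n') (Fin n') ℝ),
      F * (circulant w * X) = (circulant w)ᵀ * (F * X) := by
    intro w X; rw [← mul_assoc, hFc, mul_assoc]
  have hFcT' : ∀ (w : Fin n' → ℝ) (X : Matrix (Fin n') (Fin n') ℝ),
      F * ((circulant w)ᵀ * X) = circulant w * (F * X) := by
    intro w X; rw [← mul_assoc, hFcT, mul_assoc]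
  have hFF' : ∀ X : Matrix (Fin n') (Fin n') ℝ, F * (F * X) = X := by
    intro X; rw [← mul_assoc, hFF, one_mul]
  have hcommT : ∀ w1 w2 : Fin n' → ℝ,
      circulant w1 * (circulant w2)ᵀ = (circulant w2)ᵀ * circulant w1 := by
    intro w1 w2; rw [Matrix.transpose_circulant, Matrix.circulant_mul_comm]
  have hswap : ∀ (w1 w2 : Fin n' → ℝ) (X : Matrix (Fin n') (Fin n') ℝ),
      circulant w1 * (circulant w2 * X) = circulant w2 * (circulant w1 * X) := by
    intro w1 w2 X; rw [← mul_assoc, Matrix.circulant_mul_comm, mul_assoc]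
  have hswapT : ∀ (w1 w2 : Fin n' → ℝ) (X : Matrix (Fin n') (Fin n') ℝ),
      circulant w1 * ((circulant w2)ᵀ * X) = (circulant w2)ᵀ * (circulant w1 * X) := by
    intro w1 w2 X; rw [← mul_assoc, hcommT, mul_assoc]
  obtain ⟨S, hS⟩ : ∃ S : Matrix (Fin n') (Fin n') ℝ,
      S = ∑ i : Fin 4, circulant (v i) * (circulant (v i))ᵀ := ⟨_, rfl⟩
  obtain ⟨Blk, hBlk⟩ : ∃ Blk : Fin 4 → Fin 4 → Matrix (Fin n') (Fin n') ℝ,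
      Blk = ![![circulant (v 0), circulant (v 1) * F, circulant (v 2) * F, circulant (v 3) * F],
         ![-(circulant (v 1) * F), circulant (v 0), -(F * circulant (v 3)), F * circulant (v 2)],
         ![-(circulant (v 2) * F), F * circulant (v 3), circulant (v 0), -(F * circulant (v 1))],
         ![-(circulant (v 3) * F), -(F * circulant (v 2)), F * circulant (v 1), circulant (v 0)]] :=
    ⟨_, rfl⟩
  have h00 : (∑ r : Fin 4, Blk 0 r * (Blk 0 r)ᵀ) = S := by
    simp only [hBlk, Fin.sum_univ_four, Matrix.cons_val_zero, Matrix.cons_val_one,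
      Matrix.head_cons, Matrix.cons_val_two, Matrix.tail_cons, Matrix.cons_val_three,
      Matrix.transpose_neg, Matrix.transpose_mul, Matrix.transpose_transpose, hFt,
      Matrix.mul_neg, Matrix.neg_mul, neg_neg, mul_assoc, hFc', hFcT', hFF',
      hFc, hFcT, hFF, mul_one, one_mul]
    rw [hS, Fin.sum_univ_four]
    all_goals abel
  have h01 : (∑ r : Fin 4, Blk 0 r * (Blk 1 r)ᵀ) = 0 := by
    simp only [hBlk, Fin.sum_univ_four, Matrix.cons_val_zero, Matrix.cons_val_one,
      Matrix.head_cons, Matrix.cons_val_two, Matrix.tail_cons, Matrix.cons_val_three,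
      Matrix.transpose_neg, Matrix.transpose_mul, Matrix.transpose_transpose, hFt,
      Matrix.mul_neg, Matrix.neg_mul, neg_neg, mul_assoc, hFc', hFcT', hFF',
      hFc, hFcT, hFF, mul_one, one_mul]
    rw [hswap (v 0) (v 1) F, Matrix.circulant_mul_comm (v 2) (v 3)]
    all_goals abel
  have h02 : (∑ r : Fin 4, Blk 0 r * (Blk 2 r)ᵀ) = 0 := by
    simp only [hBlk, Fin.sum_univ_four, Matrix.cons_val_zero, Matrix.cons_val_one,
      Matrix.head_cons, Matrix.cons_val_two, Matrix.tail_cons, Matrix.cons_val_three,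
      Matrix.transpose_neg, Matrix.transpose_mul, Matrix.transpose_transpose, hFt,
      Matrix.mul_neg, Matrix.neg_mul, neg_neg, mul_assoc, hFc', hFcT', hFF',
      hFc, hFcT, hFF, mul_one, one_mul]
    rw [hswap (v 0) (v 2) F, Matrix.circulant_mul_comm (v 1) (v 3)]
    all_goals abel
  have h03 : (∑ r : Fin 4, Blk 0 r * (Blk 3 r)ᵀ) = 0 := by
    simp only [hBlk, Fin.sum_univ_four, Matrix.cons_val_zero, Matrix.cons_val_one,
      Matrix.head_cons, Matrix.cons_val_two, Matrix.tail_cons, Matrix.cons_val_three,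
      Matrix.transpose_neg, Matrix.transpose_mul, Matrix.transpose_transpose, hFt,
      Matrix.mul_neg, Matrix.neg_mul, neg_neg, mul_assoc, hFc', hFcT', hFF',
      hFc, hFcT, hFF, mul_one, one_mul]
    rw [hswap (v 0) (v 3) F, Matrix.circulant_mul_comm (v 1) (v 2)]
    all_goals abel
  have h11 : (∑ r : Fin 4, Blk 1 r * (Blk 1 r)ᵀ) = S := by
    simp only [hBlk, Fin.sum_univ_four, Matrix.cons_val_zero, Matrix.cons_val_one,
      Matrix.head_cons, Matrix.cons_val_two, Matrix.tail_cons, Matrix.cons_val_three,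
      Matrix.transpose_neg, Matrix.transpose_mul, Matrix.transpose_transpose, hFt,
      Matrix.mul_neg, Matrix.neg_mul, neg_neg, mul_assoc, hFc', hFcT', hFF',
      hFc, hFcT, hFF, mul_one, one_mul]
    rw [hS, Fin.sum_univ_four, ← hcommT (v 3) (v 3), ← hcommT (v 2) (v 2)]
    all_goals abel
  have h12 : (∑ r : Fin 4, Blk 1 r * (Blk 2 r)ᵀ) = 0 := by
    simp only [hBlk, Fin.sum_univ_four, Matrix.cons_val_zero, Matrix.cons_val_one,
      Matrix.head_cons, Matrix.cons_val_two, Matrix.tail_cons, Matrix.cons_val_three,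
      Matrix.transpose_neg, Matrix.transpose_mul, Matrix.transpose_transpose, hFt,
      Matrix.mul_neg, Matrix.neg_mul, neg_neg, mul_assoc, hFc', hFcT', hFF',
      hFc, hFcT, hFF, mul_one, one_mul]
    rw [hcommT (v 1) (v 2), hswapT (v 0) (v 3) F]
    all_goals abel
  have h13 : (∑ r : Fin 4, Blk 1 r * (Blk 3 r)ᵀ) = 0 := by
    simp only [hBlk, Fin.sum_univ_four, Matrix.cons_val_zero, Matrix.cons_val_one,
      Matrix.head_cons, Matrix.cons_val_two, Matrix.tail_cons, Matrix.cons_val_three,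
      Matrix.transpose_neg, Matrix.transpose_mul, Matrix.transpose_transpose, hFt,
      Matrix.mul_neg, Matrix.neg_mul, neg_neg, mul_assoc, hFc', hFcT', hFF',
      hFc, hFcT, hFF, mul_one, one_mul]
    rw [hcommT (v 1) (v 3), hswapT (v 0) (v 2) F]
    all_goals abel
  have h22 : (∑ r : Fin 4, Blk 2 r * (Blk 2 r)ᵀ) = S := by
    simp only [hBlk, Fin.sum_univ_four, Matrix.cons_val_zero, Matrix.cons_val_one,
      Matrix.head_cons, Matrix.cons_val_two, Matrix.tail_cons, Matrix.cons_val_three,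
      Matrix.transpose_neg, Matrix.transpose_mul, Matrix.transpose_transpose, hFt,
      Matrix.mul_neg, Matrix.neg_mul, neg_neg, mul_assoc, hFc', hFcT', hFF',
      hFc, hFcT, hFF, mul_one, one_mul]
    rw [hS, Fin.sum_univ_four, ← hcommT (v 3) (v 3), ← hcommT (v 1) (v 1)]
    all_goals abel
  have h23 : (∑ r : Fin 4, Blk 2 r * (Blk 3 r)ᵀ) = 0 := by
    simp only [hBlk, Fin.sum_univ_four, Matrix.cons_val_zero, Matrix.cons_val_one,
      Matrix.head_cons, Matrix.cons_val_two, Matrix.tail_cons, Matrix.cons_val_three,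
      Matrix.transpose_neg, Matrix.transpose_mul, Matrix.transpose_transpose, hFt,
      Matrix.mul_neg, Matrix.neg_mul, neg_neg, mul_assoc, hFc', hFcT', hFF',
      hFc, hFcT, hFF, mul_one, one_mul]
    rw [hcommT (v 2) (v 3), hswapT (v 0) (v 1) F]
    all_goals abel
  have h33 : (∑ r : Fin 4, Blk 3 r * (Blk 3 r)ᵀ) = S := by
    simp only [hBlk, Fin.sum_univ_four, Matrix.cons_val_zero, Matrix.cons_val_one,
      Matrix.head_cons, Matrix.cons_val_two, Matrix.tail_cons, Matrix.cons_val_three,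
      Matrix.transpose_neg, Matrix.transpose_mul, Matrix.transpose_transpose, hFt,
      Matrix.mul_neg, Matrix.neg_mul, neg_neg, mul_assoc, hFc', hFcT', hFF',
      hFc, hFcT, hFF, mul_one, one_mul]
    rw [hS, Fin.sum_univ_four, ← hcommT (v 2) (v 2), ← hcommT (v 1) (v 1)]
    all_goals abel
  have hsym : ∀ p q : Fin 4,
      (∑ r : Fin 4, Blk q r * (Blk p r)ᵀ) = (∑ r : Fin 4, Blk p r * (Blk q r)ᵀ)ᵀ := by
    intro p q
    rw [Matrix.transpose_sum]
    exact Finset.sum_congr rfl fun r _ => by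
      rw [Matrix.transpose_mul, Matrix.transpose_transpose]
  have h10 : (∑ r : Fin 4, Blk 1 r * (Blk 0 r)ᵀ) = 0 := by
    rw [hsym 0 1, h01, Matrix.transpose_zero]
  have h20 : (∑ r : Fin 4, Blk 2 r * (Blk 0 r)ᵀ) = 0 := by
    rw [hsym 0 2, h02, Matrix.transpose_zero]
  have h30 : (∑ r : Fin 4, Blk 3 r * (Blk 0 r)ᵀ) = 0 := by
    rw [hsym 0 3, h03, Matrix.transpose_zero]
  have h21 : (∑ r : Fin 4, Blk 2 r * (Blk 1 r)ᵀ) = 0 := by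
    rw [hsym 1 2, h12, Matrix.transpose_zero]
  have h31 : (∑ r : Fin 4, Blk 3 r * (Blk 1 r)ᵀ) = 0 := by
    rw [hsym 1 3, h13, Matrix.transpose_zero]
  have h32 : (∑ r : Fin 4, Blk 3 r * (Blk 2 r)ᵀ) = 0 := by
    rw [hsym 2 3, h23, Matrix.transpose_zero]
  have key : ∀ p q : Fin 4,
      (∑ r : Fin 4, Blk p r * (Blk q r)ᵀ) = if p = q then S else 0 := by
    have e4 : ∀ p : Fin 4, p = 0 ∨ p = 1 ∨ p = 2 ∨ p = 3 := by decide
    intro p q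
    rcases e4 p with rfl|rfl|rfl|rfl <;> rcases e4 q with rfl|rfl|rfl|rfl <;>
      first
        | (rw [if_pos rfl]
           first | exact h00 | exact h11 | exact h22 | exact h33)
        | (rw [if_neg (by decide)]
           first | exact h01 | exact h02 | exact h03 | exact h10 | exact h12 | exact h13
                 | exact h20 | exact h21 | exact h23 | exact h30 | exact h31 | exact h32)
  have hSigma : ∀ (p₁ q₁ : Fin 4) (p₂ q₂ : Fin n'),
      (M * Mᵀ) (p₁, p₂) (q₁, q₂) = (∑ r : Fin 4, Blk p₁ r * (Blk q₁ r)ᵀ) p₂ q₂ := by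
    intro p₁ q₁ p₂ q₂
    rw [Matrix.mul_apply, Fintype.sum_prod_type, Matrix.sum_apply]
    refine Finset.sum_congr rfl fun r _ => ?_
    rw [Matrix.mul_apply]
    refine Finset.sum_congr rfl fun k _ => ?_
    rw [hM, hBlk]
    simp [Matrix.transpose_apply]
  have part1 : (M * Mᵀ = ((4 * n' : ℕ) : ℝ) • 1) ↔
      S = ((4 * n' : ℕ) : ℝ) • (1 : Matrix (Fin n') (Fin n') ℝ) := by
    constructor
    · intro h
      ext i j
      have h0 := congrFun (congrFun h ((0 : Fin 4), i)) ((0 : Fin 4), j)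
      rw [hSigma 0 0 i j, key 0 0, if_pos rfl] at h0
      rw [h0]
      simp [Matrix.smul_apply, Matrix.one_apply, Prod.ext_iff]
    · intro h
      ext ⟨p₁, p₂⟩ ⟨q₁, q₂⟩
      rw [hSigma p₁ q₁ p₂ q₂, key p₁ q₁]
      by_cases hpq : p₁ = q₁
      · subst hpq
        rw [if_pos rfl, h]
        simp [Matrix.smul_apply, Matrix.one_apply, Prod.ext_iff]
      · rw [if_neg hpq]
        simp [Matrix.smul_apply, Matrix.one_apply, Prod.ext_iff, hpq]
  -- Part 2: autocorrelation vector
  obtain ⟨cc, hcc⟩ : ∃ cc : Fin n' → ℝ,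
      cc = fun m => ∑ i : Fin 4, ∑ t : Fin n', a i (t + m) * a i t := ⟨_, rfl⟩
  have hSapp : ∀ i j : Fin n', S i j = cc (j - i) := by
    intro i j
    rw [hS, Matrix.sum_apply, hcc]
    refine Finset.sum_congr rfl fun i' _ => ?_
    rw [Matrix.mul_apply]
    have hterm : ∀ k : Fin n', circulant (v i') i k * (circulant (v i'))ᵀ k j
        = a i' (k - i) * a i' (k - j) := by
      intro k
      simp [Matrix.circulant_apply, Matrix.transpose_apply, hv, neg_sub]
    rw [Finset.sum_congr rfl fun k _ => hterm k]
    refine (Fintype.sum_equiv (Equiv.addRight j) _ _ fun t => ?_).symm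
    simp only [Equiv.coe_addRight]
    rw [add_sub_cancel_right, add_sub_assoc]
  have hL1 : (S = ((4 * n' : ℕ) : ℝ) • (1 : Matrix (Fin n') (Fin n') ℝ)) ↔
      (∀ m : Fin n', cc m = if m = 0 then ((4 * n' : ℕ) : ℝ) else 0) := by
    constructor
    · intro h m
      have h0 := congrFun (congrFun h 0) m
      rw [hSapp 0 m, sub_zero] at h0
      rw [h0]
      simp [Matrix.smul_apply, Matrix.one_apply, eq_comm]
    · intro h
      ext i j
      rw [hSapp i j, h]
      by_cases hij : i = j
      · subst hij
        simp [Matrix.smul_apply, Matrix.one_apply]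
      · rw [if_neg (fun hz => hij ((sub_eq_zero.mp hz).symm))]
        simp [Matrix.smul_apply, Matrix.one_apply, hij]
  -- roots of unity
  set ω : ℂ := Complex.exp (2 * Real.pi * I / n') with hωdef
  have hprim : IsPrimitiveRoot ω n' := Complex.isPrimitiveRoot_exp n' hn.ne'
  have hω1 : ω ^ n' = 1 := hprim.pow_eq_one
  have hpowmod : ∀ m : ℕ, ω ^ (m % n') = ω ^ m := by
    intro m
    conv_rhs => rw [← Nat.mod_add_div m n']
    rw [pow_add, pow_mul, hω1, one_pow, mul_one]
  obtain ⟨g, hg⟩ : ∃ g : Fin n' → ℂ, g = fun m : Fin n' => ω ^ (m : ℕ) := ⟨_, rfl⟩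
  have hgadd : ∀ x y : Fin n', g (x + y) = g x * g y := by
    intro x y
    rw [hg]
    simp only
    rw [Fin.val_add, hpowmod, pow_add]
  have hg0 : g 0 = 1 := by rw [hg]; simp
  have habs : ‖ω‖ = 1 := by
    rw [hωdef, show (2 * (Real.pi : ℂ) * I / n') = ((2 * Real.pi / n' : ℝ) : ℂ) * I by
      push_cast; ring]
    exact Complex.norm_exp_ofReal_mul_I _
  have hginv : ∀ x : Fin n', g (-x) * g x = 1 := by
    intro x
    rw [← hgadd, neg_add_cancel, hg0]
  have hgconj : ∀ x : Fin n', (starRingEnd ℂ) (g x) = g (-x) := by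
    intro x
    have habsx : ‖g x‖ = 1 := by rw [hg]; simp [norm_pow, habs]
    have h1 : (starRingEnd ℂ) (g x) * g x = 1 := by
      rw [mul_comm, Complex.mul_conj, Complex.normSq_eq_norm_sq, habsx]
      norm_num
    exact (eq_inv_of_mul_eq_one_left h1).trans (eq_inv_of_mul_eq_one_left (hginv x)).symm
  have horth : ∀ u : Fin n', (∑ j : Fin n', g (j * u)) = if u = 0 then (n' : ℂ) else 0 := by
    intro u
    by_cases hu : u = 0
    · subst hu
      simp [mul_zero, hg0, Finset.card_univ]
    · rw [if_neg hu]
      have hgju : ∀ j : Fin n', g (j * u) = (ω ^ (u : ℕ)) ^ (j : ℕ) := by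
        intro j
        rw [hg]
        simp only
        rw [Fin.val_mul, hpowmod, Nat.mul_comm, pow_mul]
      rw [Finset.sum_congr rfl fun j _ => hgju j]
      rw [Fin.sum_univ_eq_sum_range (fun m => (ω ^ (u : ℕ)) ^ m) n']
      have hζ : ω ^ (u : ℕ) ≠ 1 := by
        intro hone
        exact hprim.pow_ne_one_of_pos_of_lt
          (fun h0 => hu (Fin.ext h0)) u.is_lt hone
      rw [geom_sum_eq hζ]
      have hζn : (ω ^ (u : ℕ)) ^ n' = 1 := by
        rw [← pow_mul, Nat.mul_comm, pow_mul, hω1, one_pow]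
      rw [hζn, sub_self, zero_div]
  have habs2 : ∀ z : ℂ, ((‖z‖ : ℝ) : ℂ) ^ 2 = z * (starRingEnd ℂ) z := by
    intro z
    rw [← Complex.ofReal_pow, Complex.sq_norm, Complex.mul_conj]
  have hhat : ∀ (i : Fin 4) (j : Fin n'),
      (∑ k : Fin n', (a i k : ℂ) * ω ^ ((j : ℕ) * (k : ℕ)))
        = ∑ k : Fin n', (a i k : ℂ) * g (j * k) := by
    intro i j
    refine Finset.sum_congr rfl fun k _ => ?_
    rw [hg]
    simp only
    rw [Fin.val_mul, hpowmod]
  have step : ∀ (i : Fin 4) (j : Fin n'),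
      (∑ k : Fin n', (a i k : ℂ) * g (j * k)) *
        (starRingEnd ℂ) (∑ k : Fin n', (a i k : ℂ) * g (j * k))
      = ∑ t : Fin n', (∑ l : Fin n', (a i (t + l) : ℂ) * (a i l : ℂ)) * g (j * t) := by
    intro i j
    rw [map_sum, Finset.sum_mul_sum]
    have hterm : ∀ k l : Fin n',
        ((a i k : ℂ) * g (j * k)) * (starRingEnd ℂ) ((a i l : ℂ) * g (j * l))
        = (a i k : ℂ) * (a i l : ℂ) * g (j * (k - l)) := by
      intro k l
      rw [_root_.map_mul, Complex.conj_ofReal, hgconj,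
        show j * (k - l) = j * k + -(j * l) by open Fin.CommRing in ring, hgadd]
      ring
    rw [Finset.sum_congr rfl fun k _ => Finset.sum_congr rfl fun l _ => hterm k l]
    rw [Finset.sum_comm]
    have hre : ∀ l : Fin n',
        (∑ k : Fin n', (a i k : ℂ) * (a i l : ℂ) * g (j * (k - l)))
        = ∑ t : Fin n', (a i (t + l) : ℂ) * (a i l : ℂ) * g (j * t) := by
      intro l
      refine (Fintype.sum_equiv (Equiv.addRight l) _ _ fun t => ?_).symm
      simp only [Equiv.coe_addRight]
      rw [add_sub_cancel_right]
    rw [Finset.sum_congr rfl fun l _ => hre l]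
    rw [Finset.sum_comm]
    refine Finset.sum_congr rfl fun t _ => ?_
    rw [Finset.sum_mul]
  have hL2 : ∀ j : Fin n',
      ((∑ i : Fin 4,
          ‖∑ k : Fin n',
            (a i k : ℂ) * ω ^ ((j : ℕ) * (k : ℕ))‖ ^ 2 : ℝ) : ℂ)
        = ∑ t : Fin n', (cc t : ℂ) * g (j * t) := by
    intro j
    rw [Complex.ofReal_sum]
    calc ∑ i : Fin 4,
          ((‖∑ k : Fin n', (a i k : ℂ) * ω ^ ((j : ℕ) * (k : ℕ))‖ ^ 2 : ℝ) : ℂ)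
        = ∑ i : Fin 4, ∑ t : Fin n', (∑ l : Fin n', (a i (t + l) : ℂ) * (a i l : ℂ)) * g (j * t) := by
          refine Finset.sum_congr rfl fun i _ => ?_
          rw [Complex.ofReal_pow, habs2, hhat, step]
      _ = ∑ t : Fin n', (cc t : ℂ) * g (j * t) := by
          rw [Finset.sum_comm]
          refine Finset.sum_congr rfl fun t _ => ?_
          rw [← Finset.sum_mul]
          congr 1
          rw [hcc]
          push_cast
          exact Finset.sum_congr rfl fun i _ => Finset.sum_congr rfl fun l _ => by
            rw [add_comm t l]
  rw [part1, hL1]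
  constructor
  · intro h j
    have hval : (∑ t : Fin n', (cc t : ℂ) * g (j * t)) = ((4 * n' : ℕ) : ℂ) := by
      have hterm : ∀ t : Fin n', (cc t : ℂ) * g (j * t)
          = if t = 0 then ((4 * n' : ℕ) : ℂ) else 0 := by
        intro t
        rw [h t]
        by_cases ht : t = 0
        · subst ht
          rw [if_pos rfl, if_pos rfl, mul_zero, hg0, mul_one]
          push_cast
          ring
        · rw [if_neg ht, if_neg ht]
          simp
      rw [Finset.sum_congr rfl fun t _ => hterm t]
      simp
    have hfin := (hL2 j).trans hval
    exact_mod_cast hfin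
  · intro h m
    have hsum : ∀ j : Fin n', (∑ t : Fin n', (cc t : ℂ) * g (j * t)) = ((4 * n' : ℕ) : ℂ) := by
      intro j
      rw [← hL2 j]
      exact_mod_cast h j
    by_cases hm0 : m = 0
    · subst hm0
      rw [if_pos rfl, hcc]
      simp only
      have h1 : ∀ (i : Fin 4) (t : Fin n'), a i (t + 0) * a i t = 1 := by
        intro i t
        rcases ha i t with h' | h' <;> rw [add_zero, h'] <;> norm_num
      rw [Finset.sum_congr rfl fun i _ => Finset.sum_congr rfl fun t _ => h1 i t]
      simp [Finset.card_univ]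
    · rw [if_neg hm0]
      have T1 : (∑ j : Fin n', g (j * (-m)) * ∑ t : Fin n', (cc t : ℂ) * g (j * t))
          = (cc m : ℂ) * n' := by
        calc (∑ j : Fin n', g (j * (-m)) * ∑ t : Fin n', (cc t : ℂ) * g (j * t))
            = ∑ j : Fin n', ∑ t : Fin n', (cc t : ℂ) * g (j * (t - m)) := by
              refine Finset.sum_congr rfl fun jj _ => ?_
              rw [Finset.mul_sum]
              refine Finset.sum_congr rfl fun t _ => ?_
              rw [show jj * (t - m) = jj * (-m) + jj * t by open Fin.CommRing in ring, hgadd]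
              ring
          _ = ∑ t : Fin n', (cc t : ℂ) * ∑ j : Fin n', g (j * (t - m)) := by
              rw [Finset.sum_comm]
              exact Finset.sum_congr rfl fun t _ => by rw [Finset.mul_sum]
          _ = (cc m : ℂ) * n' := by
              rw [Finset.sum_congr rfl fun t _ => by rw [horth (t - m)]]
              have hite : ∀ t : Fin n', (cc t : ℂ) * (if t - m = 0 then (n' : ℂ) else 0)
                  = if t = m then (cc t : ℂ) * n' else 0 := by
                intro t
                by_cases ht : t = m
                · subst ht
                  rw [if_pos rfl, if_pos (sub_self t)]
                · rw [if_neg ht, if_neg (fun hz => ht (sub_eq_zero.mp hz)), mul_zero]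
              rw [Finset.sum_congr rfl fun t _ => hite t]
              rw [Finset.sum_ite_eq' Finset.univ m (fun t => (cc t : ℂ) * n')]
              simp
      have T2 : (∑ j : Fin n', g (j * (-m)) * ∑ t : Fin n', (cc t : ℂ) * g (j * t))
          = 0 := by
        rw [Finset.sum_congr rfl fun j _ => by rw [hsum j]]
        rw [← Finset.sum_mul, horth (-m)]
        rw [if_neg (fun hz => hm0 (neg_eq_zero.mp hz)), zero_mul]
      have hccm : (cc m : ℂ) * n' = 0 := by rw [← T1, T2]
      have hne : (n' : ℂ) ≠ 0 := Nat.cast_ne_zero.mpr hn.ne'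
      rcases mul_eq_zero.mp hccm with h' | h'
      · exact_mod_cast h'
      · exact absurd h' hne
end

section
/- For a Goethals–Seidel type matrix M of order n = 4n' built from circulant ±1 blocks A, B, C, D with first rows a_1, …, a_4, the determinant satisfies det(M Mᵀ) = ∏_{j=0}^{n'−1} (Σ_{i=1}^4 |â_{i,j}|²)^4, where â_{i,j} = Σ_k a_{i,k} ω^{jk}, ω = exp(2πi/n'). -/
open Matrix Complex

set_option linter.unusedSectionVars false
set_option maxHeartbeats 1000000

namespace GSaux
variable {n' : ℕ} [NeZero n']

def cir {R : Type*} (v : Fin n' → R) : Matrix (Fin n') (Fin n') R :=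
  Matrix.of fun i j => v (j - i)

lemma cir_apply {R : Type*} (v : Fin n' → R) (i j : Fin n') : cir v i j = v (j - i) := rfl

lemma transpose_cir {R : Type*} (v : Fin n' → R) : (cir v)ᵀ = cir (fun t => v (-t)) := by
  ext i j; simp [cir_apply, transpose_apply, neg_sub]

lemma cir_mul {R : Type*} [CommRing R] (v w : Fin n' → R) :
    cir v * cir w = cir (fun t => ∑ m : Fin n', v m * w (t - m)) := by
  ext i j
  simp only [mul_apply, cir_apply]
  refine Fintype.sum_equiv (Equiv.subRight i) _ _ fun k => ?_
  simp only [Equiv.subRight_apply]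
  congr 2
  rw [sub_sub, add_sub_cancel]

lemma cir_comm {R : Type*} [CommRing R] (v w : Fin n' → R) :
    cir v * cir w = cir w * cir v := by
  rw [cir_mul, cir_mul]
  suffices h : (fun t => ∑ m : Fin n', v m * w (t - m)) = (fun t => ∑ m : Fin n', w m * v (t - m)) by rw [h]
  funext t
  refine Fintype.sum_equiv (Equiv.subLeft t) _ _ fun m => ?_
  simp only [Equiv.subLeft_apply]
  rw [sub_sub_cancel, mul_comm]

lemma cir_add {R : Type*} [Add R] (v w : Fin n' → R) : cir v + cir w = cir (v + w) := by
  ext i j; simp [cir_apply]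

lemma sub_rev (i j : Fin n') : j - i.rev = i - j.rev := by
  have hi := i.isLt; have hj := j.isLt
  rw [Fin.sub_def, Fin.sub_def]
  simp only [Fin.val_rev, Fin.mk.injEq]
  congr 1
  omega

lemma rev_sub (i j : Fin n') : j.rev - i = i.rev - j := by
  have hi := i.isLt; have hj := j.isLt
  rw [Fin.sub_def, Fin.sub_def]
  simp only [Fin.val_rev, Fin.mk.injEq]
  congr 1
  omega

def Fm : Matrix (Fin n') (Fin n') ℝ :=
  Matrix.of fun i j : Fin n' => if (i : ℕ) + (j : ℕ) = n' - 1 then (1 : ℝ) else 0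

lemma Fm_apply (i j : Fin n') : Fm i j = if j = i.rev then 1 else 0 := by
  have hi := i.isLt
  have hj := j.isLt
  have : ((i : ℕ) + (j : ℕ) = n' - 1) ↔ j = i.rev := by
    rw [Fin.ext_iff, Fin.val_rev]; omega
  simp [Fm, this]

lemma Fm_mul (X : Matrix (Fin n') (Fin n') ℝ) :
    Fm * X = Matrix.of fun i j => X i.rev j := by
  ext i j
  simp [mul_apply, Fm_apply]

lemma mul_Fm (X : Matrix (Fin n') (Fin n') ℝ) :
    X * Fm = Matrix.of fun i j => X i j.rev := by
  ext i j
  have h : ∀ k : Fin n', (j = k.rev) ↔ (k = j.rev) := by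
    intro k; constructor <;> rintro rfl <;> simp [Fin.rev_rev]
  simp [mul_apply, Fm_apply, h]

lemma transpose_Fm : (Fm (n' := n'))ᵀ = Fm := by
  ext i j
  simp only [transpose_apply, Fm, Matrix.of_apply]
  rw [Nat.add_comm]

lemma Fm_mul_Fm : (Fm (n' := n')) * Fm = 1 := by
  rw [Fm_mul]
  ext i j
  simp [Fm_apply, Fin.rev_rev, one_apply, eq_comm]

-- key exchange rules
lemma Fm_mul_cirT (v : Fin n' → ℝ) : Fm * (cir v)ᵀ = cir v * Fm := by
  rw [Fm_mul, mul_Fm]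
  ext i j
  simp only [Matrix.of_apply, transpose_apply, cir_apply]
  rw [rev_sub i j]

lemma Fm_mul_cir (v : Fin n' → ℝ) : Fm * cir v = (cir v)ᵀ * Fm := by
  rw [Fm_mul, mul_Fm]
  ext i j
  simp only [Matrix.of_apply, transpose_apply, cir_apply]
  rw [sub_rev i j]

variable (v w : Fin n' → ℝ)

lemma g0 : cir v * (cir w)ᵀ = cir v * cir (fun t => w (-t)) := by rw [transpose_cir]

lemma g1 : cir v * (cir w * Fm)ᵀ = cir v * cir w * Fm := by
  rw [transpose_mul, transpose_Fm, Fm_mul_cirT, ← mul_assoc]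

lemma g2 : (cir v * Fm) * (cir w)ᵀ = cir v * cir w * Fm := by
  rw [mul_assoc, Fm_mul_cirT, ← mul_assoc]

lemma g3 : (cir v * Fm) * (Fm * cir w)ᵀ = cir v * cir w := by
  rw [transpose_mul, transpose_Fm, ← mul_assoc, mul_assoc (cir v), Fm_mul_cirT, ← mul_assoc,
    mul_assoc (cir v * cir w), Fm_mul_Fm, mul_one]

lemma g4 : (Fm * cir v) * (cir w * Fm)ᵀ =
    cir (fun t => v (-t)) * cir (fun t => w (-t)) := by
  rw [transpose_mul, transpose_Fm, Fm_mul_cir, ← mul_assoc, mul_assoc ((cir v)ᵀ), Fm_mul_Fm,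
    mul_one, transpose_cir, transpose_cir]

lemma g5 : (Fm * cir v) * (cir w)ᵀ = cir w * cir (fun t => v (-t)) * Fm := by
  rw [Fm_mul_cir, mul_assoc, Fm_mul_cirT, ← mul_assoc, transpose_cir, cir_comm]

lemma g6 : cir v * (Fm * cir w)ᵀ = cir v * cir (fun t => w (-t)) * Fm := by
  rw [transpose_mul, transpose_Fm, transpose_cir, ← mul_assoc]

lemma g7 : (Fm * cir v) * (Fm * cir w)ᵀ = cir w * cir (fun t => v (-t)) := by
  rw [transpose_mul, transpose_Fm, Fm_mul_cir, ← mul_assoc, mul_assoc ((cir v)ᵀ), Fm_mul_cirT,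
    ← mul_assoc, mul_assoc ((cir v)ᵀ * cir w), Fm_mul_Fm, mul_one, transpose_cir, cir_comm]

lemma g8 : (cir v * Fm) * (cir w * Fm)ᵀ = cir v * cir (fun t => w (-t)) := by
  rw [transpose_mul, transpose_Fm, ← mul_assoc, mul_assoc (cir v), Fm_mul_Fm, mul_one,
    transpose_cir]

def Blk (a : Fin 4 → Fin n' → ℝ) : Fin 4 → Fin 4 → Matrix (Fin n') (Fin n') ℝ :=
  ![![cir (a 0), cir (a 1) * Fm, cir (a 2) * Fm, cir (a 3) * Fm],
    ![-(cir (a 1) * Fm), cir (a 0), -(Fm * cir (a 3)), Fm * cir (a 2)],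
    ![-(cir (a 2) * Fm), Fm * cir (a 3), cir (a 0), -(Fm * cir (a 1))],
    ![-(cir (a 3) * Fm), -(Fm * cir (a 2)), Fm * cir (a 1), cir (a 0)]]

def Smat (a : Fin 4 → Fin n' → ℝ) : Matrix (Fin n') (Fin n') ℝ :=
  ∑ i : Fin 4, cir (a i) * cir (fun t => a i (-t))

lemma blocksum (a : Fin 4 → Fin n' → ℝ) (p q : Fin 4) :
    ∑ r : Fin 4, Blk a p r * (Blk a q r)ᵀ = if p = q then Smat a else 0 := by
  fin_cases p <;> fin_cases q <;>
    simp only [Blk, Smat, Fin.sum_univ_four, Fin.zero_eta, Fin.mk_one, Fin.reduceFinMk,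
      Fin.isValue, Nat.succ_eq_add_one, Nat.reduceAdd, Matrix.cons_val_zero, Matrix.cons_val_one,
      Matrix.cons_val_two, Matrix.cons_val_three, Matrix.tail_cons, Matrix.head_cons,
      transpose_neg, mul_neg, neg_mul, neg_neg, g0, g1, g2, g3, g4, g5, g6, g7, g8,
      Fin.reduceEq, reduceIte] <;>
    (try simp only [cir_comm]) <;>
    abel

lemma det_MMT (a : Fin 4 → Fin n' → ℝ) (M : Matrix (Fin 4 × Fin n') (Fin 4 × Fin n') ℝ)
    (hM : M = Matrix.of fun p q => Blk a p.1 q.1 p.2 q.2) :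
    (M * Mᵀ).det = (Smat a).det ^ 4 := by
  have hMM : M * Mᵀ = (blockDiagonal (fun _ : Fin 4 => Smat a)).submatrix
      (Equiv.prodComm (Fin 4) (Fin n')) (Equiv.prodComm (Fin 4) (Fin n')) := by
    ext ⟨p, i⟩ ⟨q, j⟩
    have lhs : (M * Mᵀ) (p, i) (q, j) = ∑ r : Fin 4, (Blk a p r * (Blk a q r)ᵀ) i j := by
      rw [mul_apply, Fintype.sum_prod_type]
      refine Finset.sum_congr rfl fun r _ => ?_
      rw [mul_apply]
      refine Finset.sum_congr rfl fun k _ => ?_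
      simp [hM, transpose_apply]
    rw [lhs, ← Matrix.sum_apply, blocksum]
    by_cases h : p = q <;>
      simp [h, submatrix_apply, blockDiagonal_apply]
  rw [hMM, det_submatrix_equiv_self, det_blockDiagonal, Finset.prod_const, Finset.card_univ,
    Fintype.card_fin]

lemma pow_mod_eq {ω : ℂ} (hω : ω ^ n' = 1) {x y : ℕ} (h : x ≡ y [MOD n']) :
    ω ^ x = ω ^ y := by
  conv_lhs => rw [← Nat.mod_add_div x n']
  conv_rhs => rw [← Nat.mod_add_div y n']
  rw [Nat.ModEq] at h
  rw [pow_add, pow_add, pow_mul, pow_mul, hω, one_pow, one_pow, h]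

lemma val_sub_add (m l : Fin n') : ((m - l : Fin n') : ℕ) + (l : ℕ) ≡ (m : ℕ) [MOD n'] := by
  have h : (m - l) + l = m := sub_add_cancel m l
  rw [Fin.add_def] at h
  have h2 := congrArg Fin.val h
  simp only [] at h2
  show _ % _ = _ % _
  rw [Nat.mod_eq_of_lt m.isLt]
  exact h2

lemma det_cir_complex (u : Fin n' → ℂ) :
    (cir u).det = ∏ j : Fin n', ∑ k : Fin n',
      u k * Complex.exp (2 * Real.pi * I / n') ^ ((j : ℕ) * (k : ℕ)) := by
  set ω : ℂ := Complex.exp (2 * Real.pi * I / n') with hωdef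
  have hprim : IsPrimitiveRoot ω n' := Complex.isPrimitiveRoot_exp n' (NeZero.ne n')
  have hω1 : ω ^ n' = 1 := hprim.pow_eq_one
  set W : Matrix (Fin n') (Fin n') ℂ :=
    Matrix.of fun j k : Fin n' => ω ^ ((j : ℕ) * (k : ℕ)) with hWdef
  have hWv : W = vandermonde (fun j : Fin n' => ω ^ (j : ℕ)) := by
    ext i j
    simp [hWdef, vandermonde, ← pow_mul]
  have hdetW : W.det ≠ 0 := by
    rw [hWv, det_vandermonde]
    refine Finset.prod_ne_zero_iff.mpr fun i _ => Finset.prod_ne_zero_iff.mpr fun j hj => ?_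
    rw [Finset.mem_Ioi] at hj
    refine sub_ne_zero_of_ne fun hc => ?_
    exact hj.ne' (Fin.ext (hprim.pow_inj j.isLt i.isLt hc))
  have key : cir u * W = W * diagonal (fun j : Fin n' => ∑ k : Fin n',
      u k * ω ^ ((j : ℕ) * (k : ℕ))) := by
    ext i j
    rw [mul_apply, mul_diagonal]
    have : ∀ k : Fin n', cir u i k * W k j = u (k - i) * ω ^ ((k : ℕ) * (j : ℕ)) := fun k => rfl
    simp only [this]
    rw [show W i j = ω ^ ((i : ℕ) * (j : ℕ)) from rfl, Finset.mul_sum]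
    refine Fintype.sum_equiv (Equiv.subRight i) _ _ fun k => ?_
    simp only [Equiv.subRight_apply]
    have hexp : ω ^ ((k : ℕ) * (j : ℕ)) =
        ω ^ ((i : ℕ) * (j : ℕ)) * ω ^ ((j : ℕ) * (((k - i : Fin n')) : ℕ)) := by
      rw [← pow_add]
      refine pow_mod_eq hω1 ?_
      have h1 : ((k - i : Fin n') : ℕ) + (i : ℕ) ≡ (k : ℕ) [MOD n'] := val_sub_add k i
      calc (k : ℕ) * (j : ℕ) ≡ (((k - i : Fin n') : ℕ) + (i : ℕ)) * (j : ℕ) [MOD n'] :=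
            (Nat.ModEq.mul_right _ h1).symm
        _ = (i : ℕ) * (j : ℕ) + (j : ℕ) * ((k - i : Fin n') : ℕ) := by ring
    rw [hexp]
    ring
  have hdet := congrArg Matrix.det key
  rw [det_mul, det_mul, det_diagonal] at hdet
  have := mul_right_cancel₀ hdetW (by rw [hdet, mul_comm] : (cir u).det * W.det = (∏ j : Fin n',
    ∑ k : Fin n', u k * ω ^ ((j : ℕ) * (k : ℕ))) * W.det)
  exact this

lemma cir_map {R S : Type*} (f : R → S) (v : Fin n' → R) :
    (cir v).map f = cir (fun t => f (v t)) := by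
  ext i j; simp [cir, Matrix.map_apply]

lemma Smat_eq (a : Fin 4 → Fin n' → ℝ) :
    Smat a = cir (fun t => ∑ i : Fin 4, ∑ m : Fin n', a i m * a i (m - t)) := by
  unfold Smat
  have h : ∀ i : Fin 4, cir (a i) * cir (fun t => a i (-t)) =
      cir (fun t => ∑ m : Fin n', a i m * a i (m - t)) := by
    intro i
    rw [cir_mul]
    exact congrArg cir (funext fun t => Finset.sum_congr rfl fun m _ => by rw [neg_sub])
  simp only [h]
  ext i j
  simp [Matrix.sum_apply, cir]

lemma eig (a : Fin 4 → Fin n' → ℝ) (j : Fin n') :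
    ∑ t : Fin n', ((∑ i : Fin 4, ∑ m : Fin n', a i m * a i (m - t) : ℝ) : ℂ) *
      Complex.exp (2 * Real.pi * I / n') ^ ((j : ℕ) * (t : ℕ)) =
    ((∑ i : Fin 4, ‖(∑ k : Fin n', (a i k : ℂ) *
      Complex.exp (2 * Real.pi * I / n') ^ ((j : ℕ) * (k : ℕ)))‖ ^ 2 : ℝ) : ℂ) := by
  set ω : ℂ := Complex.exp (2 * Real.pi * I / n') with hωdef
  have hω0 : ω ≠ 0 := Complex.exp_ne_zero _
  have hω1 : ω ^ n' = 1 := (Complex.isPrimitiveRoot_exp n' (NeZero.ne n')).pow_eq_one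
  have hconj : ∀ e : ℕ, (starRingEnd ℂ) (ω ^ e) = (ω ^ e)⁻¹ := by
    intro e
    rw [map_pow, ← inv_pow]
    congr 1
    rw [hωdef, ← Complex.exp_conj, ← Complex.exp_neg]
    congr 1
    simp [map_div₀, map_ofNat]
    ring
  have hpow : ∀ m l : Fin n', ω ^ ((j : ℕ) * ((m - l : Fin n') : ℕ)) =
      ω ^ ((j : ℕ) * (m : ℕ)) * (ω ^ ((j : ℕ) * (l : ℕ)))⁻¹ := by
    intro m l
    rw [← div_eq_mul_inv, eq_div_iff (pow_ne_zero _ hω0), ← pow_add]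
    refine pow_mod_eq hω1 ?_
    have h := Nat.ModEq.mul_left (j : ℕ) (val_sub_add m l)
    rwa [Nat.mul_add] at h
  have habs : ∀ z : ℂ, ((‖z‖ ^ 2 : ℝ) : ℂ) = z * (starRingEnd ℂ) z := by
    intro z; rw [Complex.sq_norm, Complex.mul_conj]
  rw [Complex.ofReal_sum]
  calc ∑ t : Fin n', ((∑ i : Fin 4, ∑ m : Fin n', a i m * a i (m - t) : ℝ) : ℂ) *
        ω ^ ((j : ℕ) * (t : ℕ))
      = ∑ i : Fin 4, ∑ t : Fin n', ∑ m : Fin n',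
          ((a i m : ℂ) * (a i (m - t) : ℂ)) * ω ^ ((j : ℕ) * (t : ℕ)) := by
        rw [Finset.sum_comm]
        refine Finset.sum_congr rfl fun t _ => ?_
        push_cast
        rw [Finset.sum_mul]
        refine Finset.sum_congr rfl fun i _ => ?_
        rw [Finset.sum_mul]
    _ = ∑ i : Fin 4, ((‖(∑ k : Fin n', (a i k : ℂ) *
          ω ^ ((j : ℕ) * (k : ℕ)))‖ ^ 2 : ℝ) : ℂ) := by
        refine Finset.sum_congr rfl fun i _ => ?_
        rw [habs, map_sum, Finset.sum_mul_sum]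
        rw [Finset.sum_comm]
        refine Finset.sum_congr rfl fun m _ => ?_
        refine Fintype.sum_equiv (Equiv.subLeft m) _ _ fun t => ?_
        simp only [Equiv.subLeft_apply, _root_.map_mul, Complex.conj_ofReal, hconj]
        have h2 := hpow m (m - t)
        rw [sub_sub_cancel] at h2
        rw [h2]
        ring
  
end GSaux

open GSaux in
theorem goethals_seidel_det (n' : ℕ) (hn : 0 < n')
    (a : Fin 4 → Fin n' → ℝ)
    (ha : ∀ i k, a i k = 1 ∨ a i k = -1)
    (A B C D F : Matrix (Fin n') (Fin n') ℝ)
    (hA : A = Matrix.of fun i j => a 0 (j - i))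
    (hB : B = Matrix.of fun i j => a 1 (j - i))
    (hC : C = Matrix.of fun i j => a 2 (j - i))
    (hD : D = Matrix.of fun i j => a 3 (j - i))
    (hF : F = Matrix.of fun i j : Fin n' => if (i : ℕ) + (j : ℕ) = n' - 1 then (1 : ℝ) else 0)
    (M : Matrix (Fin 4 × Fin n') (Fin 4 × Fin n') ℝ)
    (hM : M = Matrix.of fun p q =>
      (![![A, B * F, C * F, D * F],
         ![-(B * F), A, -(F * D), F * C],
         ![-(C * F), F * D, A, -(F * B)],
         ![-(D * F), -(F * C), F * B, A]] p.1 q.1) p.2 q.2) :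
    (M * Mᵀ).det = ∏ j : Fin n',
      (∑ i : Fin 4,
        ‖(∑ k : Fin n',
          (a i k : ℂ) * Complex.exp (2 * Real.pi * I / n') ^ ((j : ℕ) * (k : ℕ)))‖ ^ 2) ^ 4 := by
  haveI : NeZero n' := ⟨hn.ne'⟩
  have hM' : M = Matrix.of fun p q => GSaux.Blk a p.1 q.1 p.2 q.2 := by
    rw [hM, hA, hB, hC, hD, hF]
    rfl
  rw [GSaux.det_MMT a M hM', Finset.prod_pow]
  congr 1
  have h1 : ((GSaux.Smat a).det : ℂ) = ∏ j : Fin n',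
      ((∑ i : Fin 4, ‖(∑ k : Fin n', (a i k : ℂ) *
        Complex.exp (2 * Real.pi * I / n') ^ ((j : ℕ) * (k : ℕ)))‖ ^ 2 : ℝ) : ℂ) := by
    have h0 := RingHom.map_det Complex.ofRealHom (GSaux.Smat a)
    rw [RingHom.mapMatrix_apply] at h0
    rw [show ((GSaux.Smat a).det : ℂ) = Complex.ofRealHom (GSaux.Smat a).det from rfl, h0,
      GSaux.Smat_eq, GSaux.cir_map, GSaux.det_cir_complex]
    exact Finset.prod_congr rfl fun j _ => GSaux.eig a j
  exact_mod_cast h1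
end
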